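/- arXiv:2301.06430 — 5 statements merged into one kernel-verified Lean document; each statement's English description precedes it below -/
import Mathlib

section
/- Let p be an odd prime, u ∈ 1 + pZ_p, n ≥ 1, and let ζ be a primitive p^m-th root of unity in C_p with m > n. Let ξ_n(x) = ((1+x)^{p^n} − 1)/((1+x)^{p^{n−1}} − 1). Then for any integer s, the p-adic valuation of ξ_n(u^s ζ − 1) equals 1/p^{m−n}. -/
open Finset IsUltrametricDist Polynomial

section Aux

variable {K : Type*} [NormedField K] [IsUltrametricDist K]

lemma aux_norm_root_one {η : K} {r : ℕ} (hr : r ≠ 0) (h : η ^ r = 1) : ‖η‖ = 1 := by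
  have h1 : ‖η‖ ^ r = 1 ^ r := by rw [← norm_pow, h, norm_one, one_pow]
  exact (pow_left_inj₀ (norm_nonneg _) zero_le_one hr).mp h1

lemma aux_pow_sub_one_le {η : K} (hη : ‖η‖ = 1) (a : ℕ) : ‖η ^ a - 1‖ ≤ ‖η - 1‖ := by
  rw [← geom_sum_mul, norm_mul]
  have : ‖∑ i ∈ range a, η ^ i‖ ≤ 1 := by
    apply norm_sum_le_of_forall_le_of_nonneg zero_le_one
    intro i _
    rw [norm_pow, hη, one_pow]
  calc ‖∑ i ∈ range a, η ^ i‖ * ‖η - 1‖ ≤ 1 * ‖η - 1‖ :=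
        mul_le_mul_of_nonneg_right this (norm_nonneg _)
    _ = ‖η - 1‖ := one_mul _

lemma aux_prim_norm_eq {η μ : K} {r : ℕ} (hr : r ≠ 0)
    (hη : IsPrimitiveRoot η r) (hμ : IsPrimitiveRoot μ r) : ‖μ - 1‖ = ‖η - 1‖ := by
  have : NeZero r := ⟨hr⟩
  have key : ∀ (a b : K), IsPrimitiveRoot a r → IsPrimitiveRoot b r → ‖b - 1‖ ≤ ‖a - 1‖ := by
    intro a b ha hb
    obtain ⟨i, -, hi⟩ := ha.eq_pow_of_pow_eq_one hb.pow_eq_one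
    rw [← hi]
    exact aux_pow_sub_one_le (aux_norm_root_one hr ha.pow_eq_one) i
  exact le_antisymm (key η μ hη hμ) (key μ η hμ hη)

lemma aux_cyclo_norm {p : ℕ} [hp : Fact p.Prime] (j : ℕ) {η : K}
    (hη : IsPrimitiveRoot η (p ^ (j + 1))) :
    ‖η - 1‖ ^ (p ^ (j + 1)).totient = ‖(p : K)‖ := by
  have hpos : 0 < p ^ (j + 1) := pow_pos hp.out.pos _
  have h1 : eval 1 (cyclotomic (p ^ (j + 1)) K) = (p : K) :=
    eval_one_cyclotomic_prime_pow j
  rw [cyclotomic_eq_prod_X_sub_primitiveRoots hη, eval_prod] at h1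
  simp only [eval_sub, eval_X, eval_C] at h1
  rw [← h1, norm_prod]
  rw [← hη.card_primitiveRoots]
  rw [Finset.prod_congr rfl (g := fun _ => ‖η - 1‖) ?_, Finset.prod_const]
  intro μ hμ
  rw [mem_primitiveRoots hpos] at hμ
  rw [norm_sub_rev]
  exact aux_prim_norm_eq hpos.ne' hη hμ

lemma aux_prim_norm {p : ℕ} [hp : Fact p.Prime] (hpK : ‖(p : K)‖ = (p : ℝ)⁻¹) (j : ℕ) {η : K}
    (hη : IsPrimitiveRoot η (p ^ (j + 1))) :
    ‖η - 1‖ = (p : ℝ) ^ (-(((p ^ (j + 1)).totient : ℝ))⁻¹) := by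
  have ht : (p ^ (j + 1)).totient ≠ 0 :=
    Nat.totient_pos.mpr (pow_pos hp.out.pos _) |>.ne'
  have hp1 : (1 : ℝ) < p := by exact_mod_cast hp.out.one_lt
  have hp0 : (0 : ℝ) < p := by positivity
  refine (pow_left_inj₀ (norm_nonneg _) (Real.rpow_nonneg hp0.le _) ht).mp ?_
  rw [aux_cyclo_norm j hη, hpK, ← Real.rpow_natCast ((p:ℝ) ^ _) _, ← Real.rpow_mul hp0.le]
  rw [neg_mul, inv_mul_cancel₀ (by exact_mod_cast ht), Real.rpow_neg_one]

end Aux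

/-- Let `p` be an odd prime, `u ∈ 1 + pZ_p`, `n ≥ 1`, and `ζ` a primitive
`p^m`-th root of unity (in a field like `C_p`) with `m > n`.  With
`ξ_n(x) = ((1+x)^{p^n} − 1)/((1+x)^{p^{n−1}} − 1) = ∑_{k<p} (1+x)^{k p^{n-1}}`,
for any integer `s` the `p`-adic valuation of `ξ_n(u^s ζ − 1)` equals
`1/p^{m−n}`, i.e. its norm is `p^{-1/p^{m-n}}`. -/
theorem stmt1 (p : ℕ) (hp : p.Prime) (hodd : Odd p)
    (K : Type*) [NormedField K] [IsUltrametricDist K]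
    (hpK : ‖(p : K)‖ = (p : ℝ)⁻¹)
    (u : Kˣ) (hu : ‖(u : K) - 1‖ ≤ (p : ℝ)⁻¹)
    (n m : ℕ) (hn : 1 ≤ n) (hm : n < m)
    (ζ : K) (hζ : IsPrimitiveRoot ζ (p ^ m)) (s : ℤ) :
    ‖∑ k ∈ Finset.range p, ((u : K) ^ s * ζ) ^ (k * p ^ (n - 1))‖
      = (p : ℝ) ^ (-(1 : ℝ) / (p : ℝ) ^ (m - n)) := by
  have : Fact p.Prime := ⟨hp⟩
  have hp1 : (1 : ℝ) < p := by exact_mod_cast hp.one_lt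
  have hp0 : (0 : ℝ) < p := by positivity
  -- norm of u is 1
  have hu1 : ‖(u : K)‖ = 1 := by
    have h1 : ‖(u : K) - 1‖ < 1 := hu.trans_lt (by rw [inv_lt_one_iff₀]; right; exact hp1)
    have h2 := norm_add_eq_max_of_norm_ne_norm (x := (u : K) - 1) (y := (1 : K))
      (by simpa using h1.ne)
    simp only [sub_add_cancel, norm_one] at h2
    rw [h2]
    exact max_eq_right h1.le
  -- norm of u^t - 1 is ≤ p⁻¹ for all integers t
  have hut : ∀ t : ℤ, ‖(u : K) ^ t - 1‖ ≤ (p : ℝ)⁻¹ := by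
    have hnat : ∀ a : ℕ, ‖(u : K) ^ a - 1‖ ≤ (p : ℝ)⁻¹ := by
      intro a
      calc ‖(u : K) ^ a - 1‖ ≤ ‖(u : K) - 1‖ := aux_pow_sub_one_le hu1 a
        _ ≤ (p : ℝ)⁻¹ := hu
    intro t
    rcases t with a | a
    · simpa using hnat a
    · rw [zpow_negSucc]
      have hinv : ((u : K) ^ (a + 1))⁻¹ - 1 = ((u : K) ^ (a + 1))⁻¹ * (1 - (u : K) ^ (a + 1)) := by
        field_simp
      rw [hinv, norm_mul, norm_inv, norm_pow, hu1, one_pow, inv_one, one_mul, norm_sub_rev]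
      exact hnat (a + 1)
  -- the key multiplication lemma
  have hmix : ∀ (x y : K), ‖x‖ = 1 → ‖x - 1‖ < ‖y - 1‖ → ‖x * y - 1‖ = ‖y - 1‖ := by
    intro x y hx hxy
    have heq : x * y - 1 = x * (y - 1) + (x - 1) := by ring
    have h1 : ‖x * (y - 1)‖ = ‖y - 1‖ := by rw [norm_mul, hx, one_mul]
    rw [heq, norm_add_eq_max_of_norm_ne_norm (by rw [h1]; exact hxy.ne'), h1]
    exact max_eq_left hxy.le
  obtain ⟨b, hmn⟩ : ∃ b, m - n = b + 1 := ⟨m - n - 1, by omega⟩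
  -- primitive roots of prime-power order
  have hη1 : IsPrimitiveRoot (ζ ^ p ^ (n - 1)) (p ^ (b + 1 + 1)) := by
    apply hζ.pow (pow_pos hp.pos m)
    rw [← pow_add]; congr 1; omega
  have hη2 : IsPrimitiveRoot (ζ ^ p ^ n) (p ^ (b + 1)) := by
    apply hζ.pow (pow_pos hp.pos m)
    rw [← pow_add]; congr 1; omega
  -- totients
  have htot : ∀ j : ℕ, ((p ^ (j + 1)).totient : ℝ) = (p : ℝ) ^ j * ((p : ℝ) - 1) := by
    intro j
    rw [Nat.totient_prime_pow hp (Nat.succ_pos j), Nat.succ_sub_one, Nat.cast_mul,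
      Nat.cast_pow, Nat.cast_sub hp.one_lt.le, Nat.cast_one]
  have htot1 : ∀ j : ℕ, (1 : ℝ) < ((p ^ (j + 1)).totient : ℝ) := by
    intro j
    have h3 : 3 ≤ p := by
      have h4 := hp.two_le
      have h5 := Nat.odd_iff.mp hodd
      omega
    rw [htot j]
    have h1 : (1 : ℝ) ≤ (p : ℝ) ^ j := one_le_pow₀ hp1.le
    have h2 : (2 : ℝ) ≤ (p : ℝ) - 1 := by
      have : (3 : ℝ) ≤ p := by exact_mod_cast h3
      linarith
    nlinarith
  have hub : ∀ j : ℕ, (p : ℝ)⁻¹ < (p : ℝ) ^ (-(((p ^ (j + 1)).totient : ℝ))⁻¹) := by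
    intro j
    rw [← Real.rpow_neg_one]
    rw [Real.rpow_lt_rpow_left_iff hp1, neg_lt_neg_iff]
    have := htot1 j
    rw [inv_lt_one_iff₀]
    right; exact this
  -- norms of the two prime-power roots
  have hA1 : ‖ζ ^ p ^ (n - 1) - 1‖ = (p : ℝ) ^ (-(((p ^ (b + 1 + 1)).totient : ℝ))⁻¹) :=
    aux_prim_norm hpK (b + 1) hη1
  have hA2 : ‖ζ ^ p ^ n - 1‖ = (p : ℝ) ^ (-(((p ^ (b + 1)).totient : ℝ))⁻¹) :=
    aux_prim_norm hpK b hη2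
  set w : K := (u : K) ^ s * ζ with hw
  -- decompose powers of w
  have hwpow : ∀ N : ℕ, w ^ N = (u : K) ^ (s * (N : ℤ)) * ζ ^ N := by
    intro N
    rw [hw, mul_pow, ← zpow_natCast ((u : K) ^ s) N, ← zpow_mul]
  have hnormu : ∀ t : ℤ, ‖(u : K) ^ t‖ = 1 := by
    intro t; rw [norm_zpow, hu1, one_zpow]
  -- norms of w^{p^{n-1}} - 1 and w^{p^n} - 1
  have hnA : ‖w ^ p ^ (n - 1) - 1‖ = ‖ζ ^ p ^ (n - 1) - 1‖ := by
    rw [hwpow]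
    exact hmix _ _ (hnormu _) ((hut _).trans_lt (by rw [hA1]; exact hub (b + 1)))
  have hnAp : ‖w ^ p ^ n - 1‖ = ‖ζ ^ p ^ n - 1‖ := by
    rw [hwpow]
    exact hmix _ _ (hnormu _) ((hut _).trans_lt (by rw [hA2]; exact hub b))
  -- geometric sum identity
  have hgeom : (∑ k ∈ Finset.range p, w ^ (k * p ^ (n - 1))) * (w ^ p ^ (n - 1) - 1)
      = w ^ p ^ n - 1 := by
    have h1 : ∀ k, w ^ (k * p ^ (n - 1)) = (w ^ p ^ (n - 1)) ^ k := fun k => pow_mul' w k _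
    rw [Finset.sum_congr rfl (fun k _ => h1 k), geom_sum_mul, ← pow_mul]
    congr 2
    rw [← pow_succ]
    congr 1
    omega
  have hne : ‖w ^ p ^ (n - 1) - 1‖ ≠ 0 := by
    rw [hnA, hA1]
    positivity
  have hnorm : ‖∑ k ∈ Finset.range p, w ^ (k * p ^ (n - 1))‖
      = ‖w ^ p ^ n - 1‖ / ‖w ^ p ^ (n - 1) - 1‖ := by
    rw [eq_div_iff hne, ← norm_mul, hgeom]
  rw [hnorm, hnA, hnAp, hA1, hA2, ← Real.rpow_sub hp0, hmn]
  congr 1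
  rw [htot, htot]
  have hpne : (p : ℝ) ≠ 0 := hp0.ne'
  have hppow : (p : ℝ) ^ b ≠ 0 := pow_ne_zero _ hpne
  have hppow2 : (p : ℝ) ^ (b + 1) ≠ 0 := pow_ne_zero _ hpne
  have hpm1 : (p : ℝ) - 1 ≠ 0 := by linarith
  field_simp
  ring
end

section
/- Let p be an odd prime, u ∈ 1 + pZ_p, n ≥ 1, and ζ a primitive p^m-th root of unity with m < n. Let ξ_n(x) = ((1+x)^{p^n} − 1)/((1+x)^{p^{n−1}} − 1). Then for any integer l ≠ 0, ξ_n(u^l ζ − 1)/p is a p-adic unit; moreover ξ_n(u^0·1 − 1)/p = ξ_n(0)/p = 1. -/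
/-!
Since `ζ ^ p ^ (n - 1) = 1`, the sum is `∑_{k<p} a ^ k` with `a = u ^ (l p ^ (n - 1))`, and
`‖a - 1‖ ≤ ‖u - 1‖ ≤ ‖p‖`. Expanding `a ^ k = 1 + k (a - 1) + O((a - 1) ^ 2)` gives
`∑_{k<p} a ^ k = p + (a - 1) p (p - 1) / 2 + O((a - 1) ^ 2)`, and `(p - 1) / 2` is an integer
because `p` is odd; hence the sum differs from `p` by something of norm `< ‖p‖`, so it has
norm `‖p‖` by the ultrametric inequality.
-/

open Finset IsUltrametricDist

theorem Nat.sum_range_id_of_odd {p : ℕ} (hp : Odd p) : ∑ i ∈ range p, i = p * (p / 2) := by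
  obtain ⟨q, rfl⟩ := hp
  have h := sum_range_id_mul_two (2 * q + 1)
  rw [Nat.add_sub_cancel] at h
  have : (2 * q + 1) / 2 = q := by omega
  rw [this]
  linarith

section SeminormedRing

variable {R : Type*} [SeminormedRing R] [NormOneClass R] [IsUltrametricDist R] {x : R}

theorem norm_eq_one_of_norm_sub_one_lt_one (hx : ‖x - 1‖ < 1) : ‖x‖ = 1 := by
  have h := norm_add_eq_max_of_norm_ne_norm (x := x - 1) (y := 1)
    (by rw [norm_one]; exact hx.ne)
  rwa [sub_add_cancel, norm_one, max_eq_right hx.le] at h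

theorem norm_geom_sum_le_one (hx : ‖x‖ ≤ 1) (n : ℕ) : ‖∑ i ∈ range n, x ^ i‖ ≤ 1 :=
  norm_sum_le_of_forall_le_of_nonneg zero_le_one fun i _ =>
    (norm_pow_le x i).trans (pow_le_one₀ (norm_nonneg x) hx)

theorem norm_pow_sub_one_le (hx : ‖x‖ ≤ 1) (n : ℕ) : ‖x ^ n - 1‖ ≤ ‖x - 1‖ := by
  rw [← mul_geom_sum]
  calc ‖(x - 1) * ∑ i ∈ range n, x ^ i‖ ≤ ‖x - 1‖ * 1 :=
        (norm_mul_le _ _).trans (by gcongr; exact norm_geom_sum_le_one hx n)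
    _ = ‖x - 1‖ := mul_one _

theorem norm_pow_sub_one_sub_mul_le (hx : ‖x‖ ≤ 1) (n : ℕ) :
    ‖x ^ n - 1 - n * (x - 1)‖ ≤ ‖x - 1‖ ^ 2 := by
  have h : x ^ n - 1 - n * (x - 1) = (x - 1) * ∑ i ∈ range n, (x ^ i - 1) := by
    rw [sum_sub_distrib, mul_sub (x - 1), mul_geom_sum, sum_const, card_range, nsmul_one,
      (Nat.cast_commute n (x - 1)).eq]
  rw [h, sq]
  exact (norm_mul_le _ _).trans <| by
    gcongr
    exact norm_sum_le_of_forall_le_of_nonneg (norm_nonneg _)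
      fun i _ => norm_pow_sub_one_le hx i

theorem norm_geom_sum_sub_natCast_le {p : ℕ} (hp : Odd p) (hx : ‖x‖ ≤ 1) :
    ‖∑ k ∈ range p, x ^ k - p‖ ≤ max (‖x - 1‖ ^ 2) (‖(p : R)‖ * ‖x - 1‖) := by
  have h : ∑ k ∈ range p, x ^ k - p
      = ∑ k ∈ range p, (x ^ k - 1 - k * (x - 1)) + p * ((p / 2 : ℕ) : R) * (x - 1) := by
    rw [← Nat.cast_mul, ← Nat.sum_range_id_of_odd hp, Nat.cast_sum, sum_mul,
      ← sum_add_distrib]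
    simp
  rw [h]
  refine (norm_add_le_max _ _).trans (max_le_max ?_ ?_)
  · exact norm_sum_le_of_forall_le_of_nonneg (sq_nonneg _)
      fun k _ => norm_pow_sub_one_sub_mul_le hx k
  · calc ‖(p : R) * ((p / 2 : ℕ) : R) * (x - 1)‖
        ≤ ‖(p : R)‖ * ‖((p / 2 : ℕ) : R)‖ * ‖x - 1‖ := norm_mul₃_le
      _ ≤ ‖(p : R)‖ * 1 * ‖x - 1‖ := by gcongr; exact norm_natCast_le_one R _
      _ = ‖(p : R)‖ * ‖x - 1‖ := by rw [mul_one]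

theorem norm_geom_sum_eq_norm_natCast {p : ℕ} (hp : Odd p) (hp0 : 0 < ‖(p : R)‖)
    (hx : ‖x - 1‖ < 1) (hxp : ‖x - 1‖ ≤ ‖(p : R)‖) :
    ‖∑ k ∈ range p, x ^ k‖ = ‖(p : R)‖ := by
  have hsmall : ‖∑ k ∈ range p, x ^ k - p‖ < ‖(p : R)‖ := by
    have hx1 := (norm_eq_one_of_norm_sub_one_lt_one hx).le
    refine (norm_geom_sum_sub_natCast_le hp hx1).trans_lt
      (max_lt ?_ (mul_lt_of_lt_one_right hp0 hx))
    rw [sq]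
    exact (mul_le_mul_of_nonneg_left hxp (norm_nonneg _)).trans_lt (mul_lt_of_lt_one_left hp0 hx)
  rw [← add_sub_cancel (p : R) (∑ k ∈ range p, x ^ k),
    norm_add_eq_max_of_norm_ne_norm hsmall.ne', max_eq_left hsmall.le]

end SeminormedRing

theorem norm_zpow_sub_one_le {K : Type*} [NormedField K] [IsUltrametricDist K] {x : K}
    (hx : ‖x‖ = 1) (j : ℤ) : ‖x ^ j - 1‖ ≤ ‖x - 1‖ := by
  obtain ⟨n, rfl | rfl⟩ := Int.eq_nat_or_neg j
  · rw [zpow_natCast]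
    exact norm_pow_sub_one_le hx.le n
  · have hxn : x ^ n ≠ 0 := pow_ne_zero n (norm_ne_zero_iff.mp (by rw [hx]; exact one_ne_zero))
    have h : x ^ (-(n : ℤ)) - 1 = -((x ^ n)⁻¹ * (x ^ n - 1)) := by
      rw [zpow_neg, zpow_natCast, mul_sub, inv_mul_cancel₀ hxn, mul_one, neg_sub]
    rw [h, norm_neg, norm_mul, norm_inv, norm_pow, hx, one_pow, inv_one, one_mul]
    exact norm_pow_sub_one_le hx.le n

theorem stmt2_general (p : ℕ) (hp : p.Prime) (hodd : Odd p)
    (K : Type*) [NormedField K] [IsUltrametricDist K]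
    (hpK : ‖(p : K)‖ = (p : ℝ)⁻¹)
    (u : Kˣ) (hu : ‖(u : K) - 1‖ ≤ (p : ℝ)⁻¹)
    (n m : ℕ) (hm : m < n)
    (ζ : K) (hζ : IsPrimitiveRoot ζ (p ^ m)) :
    (∀ l : ℤ, l ≠ 0 →
      ‖(∑ k ∈ Finset.range p, ((u : K) ^ l * ζ) ^ (k * p ^ (n - 1))) / (p : K)‖ = 1)
    ∧ (∑ k ∈ Finset.range p, ((1 : K)) ^ (k * p ^ (n - 1))) / (p : K) = 1 := by
  have hp0 : 0 < ‖(p : K)‖ := by rw [hpK]; exact inv_pos.mpr (by exact_mod_cast hp.pos)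
  have hpK_lt_one : (p : ℝ)⁻¹ < 1 := inv_lt_one_of_one_lt₀ (by exact_mod_cast hp.one_lt)
  refine ⟨fun l _ => ?_, ?_⟩
  · have hζ_pow : ζ ^ p ^ (n - 1) = 1 :=
      (hζ.pow_eq_one_iff_dvd _).mpr (pow_dvd_pow p (by omega))
    set a : K := (u : K) ^ (l * (p ^ (n - 1) : ℕ))
    have hsum : ∀ k ∈ range p, ((u : K) ^ l * ζ) ^ (k * p ^ (n - 1)) = a ^ k := fun k _ => by
      rw [mul_comm k, pow_mul, mul_pow, hζ_pow, mul_one, ← zpow_natCast (_ ^ l), ← zpow_mul]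
    have hu_norm : ‖(u : K)‖ = 1 := norm_eq_one_of_norm_sub_one_lt_one (hu.trans_lt hpK_lt_one)
    have ha : ‖a - 1‖ ≤ (p : ℝ)⁻¹ := (norm_zpow_sub_one_le hu_norm _).trans hu
    rw [sum_congr rfl hsum, norm_div,
      norm_geom_sum_eq_norm_natCast hodd hp0 (ha.trans_lt hpK_lt_one) (hpK ▸ ha),
      div_self hp0.ne']
  · simp only [one_pow, sum_const, card_range, nsmul_one]
    exact div_self (norm_pos_iff.mp hp0)

/-- Let `p` be an odd prime, `u ∈ 1 + pZ_p` (a topological generator, hence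
no power of `u` is `1`), `n ≥ 1`, and `ζ` a root of unity of exact order `p^m`
with `m < n`.  With `ξ_n(x) = ∑_{k<p} (1+x)^{k p^{n-1}}`
(i.e. `((1+x)^{p^n}−1)/((1+x)^{p^{n−1}}−1)`), for any integer `l ≠ 0`,
`ξ_n(u^l ζ − 1)/p` is a `p`-adic unit (norm `1`); moreover
`ξ_n(u^0·1 − 1)/p = ξ_n(0)/p = 1`. -/
theorem stmt2 (p : ℕ) (hp : p.Prime) (hodd : Odd p)
    (K : Type*) [NormedField K] [IsUltrametricDist K]
    (hpK : ‖(p : K)‖ = (p : ℝ)⁻¹)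
    (u : Kˣ) (hu : ‖(u : K) - 1‖ ≤ (p : ℝ)⁻¹)
    (huro : ∀ k : ℤ, k ≠ 0 → (u : K) ^ k ≠ 1)
    (n m : ℕ) (hn : 1 ≤ n) (hm : m < n)
    (ζ : K) (hζ : IsPrimitiveRoot ζ (p ^ m)) :
    (∀ l : ℤ, l ≠ 0 →
      ‖(∑ k ∈ Finset.range p, ((u : K) ^ l * ζ) ^ (k * p ^ (n - 1))) / (p : K)‖ = 1)
    ∧ (∑ k ∈ Finset.range p, ((1 : K)) ^ (k * p ^ (n - 1))) / (p : K) = 1 :=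
  stmt2_general p hp hodd K hpK u hu n m hm ζ hζ
end

section
/- (Lagrange interpolation bound at u^j − 1.) Let p be odd, u ∈ 1 + pZ_p, r ≥ 1, and α_j = u^j − 1 for j = 0, …, r−1. Then for every 0 ≤ i < r, ∏_{j≠i} |u−1|_p / |α_i − α_j|_p = (|i!|_p |(r−1−i)!|_p)^{−1}, and hence max_{0≤i<r} ∏_{j≠i} |u−1|_p/|α_i − α_j|_p = |(r−1)!|_p^{−1}. -/
open Finset

namespace Stmt8Aux

variable {p : ℕ} [hp : Fact p.Prime]

lemma pinv_lt_one : (p : ℝ)⁻¹ < 1 := by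
  have h1 : (1:ℝ) < p := by exact_mod_cast hp.out.one_lt
  exact inv_lt_one_of_one_lt₀ h1

lemma pinv_pos : (0:ℝ) < (p:ℝ)⁻¹ := by
  have : (0:ℝ) < p := by exact_mod_cast hp.out.pos
  positivity

lemma norm_nat_le_one (n : ℕ) : ‖(n:ℚ_[p])‖ ≤ 1 := by
  exact_mod_cast Padic.norm_int_le_one (n:ℤ)

lemma norm_nat_eq_one {b : ℕ} (hb : ¬ p ∣ b) : ‖(b:ℚ_[p])‖ = 1 := by
  refine le_antisymm (norm_nat_le_one b) ?_
  by_contra h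
  push_neg at h
  have : ‖((b:ℤ):ℚ_[p])‖ < 1 := by exact_mod_cast h
  rw [Padic.norm_intCast_lt_one_iff] at this
  exact hb (by exact_mod_cast this)

lemma norm_nat_le_pinv {n : ℕ} (h : p ∣ n) : ‖(n:ℚ_[p])‖ ≤ (p:ℝ)⁻¹ := by
  have := (Padic.norm_int_le_pow_iff_dvd (n:ℤ) 1).mpr (by exact_mod_cast (by simpa using h))
  simpa using this

lemma norm_u_eq_one {u : ℚ_[p]} (hu : ‖u - 1‖ < 1) : ‖u‖ = 1 := by
  have h : u = (u - 1) + 1 := by ring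
  rw [h, Padic.add_eq_max_of_ne (by rw [norm_one]; exact ne_of_lt hu), norm_one,
    max_eq_right (le_of_lt hu)]

lemma pow_sub_one_le {u : ℚ_[p]} (hu : ‖u - 1‖ < 1) (k : ℕ) : ‖u ^ k - 1‖ ≤ ‖u - 1‖ := by
  induction k with
  | zero => simp
  | succ k ih =>
    have h : u ^ (k+1) - 1 = u * (u ^ k - 1) + (u - 1) := by ring
    rw [h]
    refine le_trans (Padic.nonarchimedean _ _) ?_
    rw [norm_mul, norm_u_eq_one hu, one_mul]
    exact max_le ih le_rfl

lemma norm_pow_sub_one_coprime {u : ℚ_[p]} (hu : ‖u - 1‖ < 1) {b : ℕ} (hb : ¬ p ∣ b) :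
    ‖u ^ b - 1‖ = ‖u - 1‖ := by
  have hgeom : (∑ k ∈ range b, u ^ k) * (u - 1) = u ^ b - 1 := geom_sum_mul u b
  rw [← hgeom, norm_mul]
  suffices h : ‖∑ k ∈ range b, u ^ k‖ = 1 by rw [h, one_mul]
  have hS : (∑ k ∈ range b, u ^ k) = (b:ℚ_[p]) + ∑ k ∈ range b, (u ^ k - 1) := by
    rw [Finset.sum_sub_distrib]
    simp
  have hε : ‖∑ k ∈ range b, (u ^ k - 1)‖ < 1 := by
    refine lt_of_le_of_lt (IsUltrametricDist.norm_sum_le_of_forall_le_of_nonneg (norm_nonneg _)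
      (fun k _ => pow_sub_one_le hu k)) hu
  rw [hS, Padic.add_eq_max_of_ne (by rw [norm_nat_eq_one hb]; exact (ne_of_lt hε).symm),
    norm_nat_eq_one hb, max_eq_left (le_of_lt hε)]

lemma step (hodd : Odd p) {u : ℚ_[p]} (hu : ‖u - 1‖ ≤ (p:ℝ)⁻¹) :
    ‖u ^ p - 1‖ = (p:ℝ)⁻¹ * ‖u - 1‖ := by
  by_cases hu1 : u = 1
  · simp [hu1]
  have hp3 : 3 ≤ p := by
    by_contra h
    push_neg at h
    have h2 := hp.out.two_le
    have hpe : p = 2 := by omega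
    rw [hpe] at hodd
    exact (by decide : ¬ Odd 2) hodd
  have hs : u - 1 ≠ 0 := sub_ne_zero.mpr hu1
  have hspos : 0 < ‖u - 1‖ := norm_pos_iff.mpr hs
  have hs1 : ‖u - 1‖ ≤ 1 := hu.trans (le_of_lt pinv_lt_one)
  have hexp : u ^ p - 1 - (p:ℚ_[p]) * (u - 1)
      = ∑ k ∈ Ico 2 (p+1), (u-1) ^ k * (p.choose k : ℚ_[p]) := by
    have h1 : u ^ p = ∑ k ∈ range (p+1), (u-1) ^ k * (p.choose k : ℚ_[p]) := by
      conv_lhs => rw [show u = (u - 1) + 1 by ring]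
      rw [add_pow]
      simp
    rw [h1, range_eq_Ico, ← Finset.sum_Ico_consecutive _ (by omega : 0 ≤ 2) (by omega : 2 ≤ p+1)]
    have h2 : ∑ k ∈ Ico 0 2, (u-1) ^ k * (p.choose k : ℚ_[p]) = 1 + (u-1) * p := by
      rw [← range_eq_Ico, Finset.sum_range_succ, Finset.sum_range_succ]
      simp
    rw [h2]
    ring
  have hbound : ‖u ^ p - 1 - (p:ℚ_[p]) * (u - 1)‖ ≤ ‖u - 1‖ * (p:ℝ)⁻¹ * (p:ℝ)⁻¹ := by
    rw [hexp]
    refine IsUltrametricDist.norm_sum_le_of_forall_le_of_nonneg (by positivity) ?_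
    intro k hk
    rw [mem_Ico] at hk
    rw [norm_mul, norm_pow]
    by_cases hkp : k = p
    · rw [hkp, Nat.choose_self]
      simp only [Nat.cast_one, norm_one, mul_one]
      calc ‖u - 1‖ ^ p ≤ ‖u - 1‖ ^ 3 :=
            pow_le_pow_of_le_one (norm_nonneg _) hs1 hp3
        _ = ‖u - 1‖ * ‖u - 1‖ * ‖u - 1‖ := by ring
        _ ≤ ‖u - 1‖ * (p:ℝ)⁻¹ * ‖u - 1‖ :=
            mul_le_mul_of_nonneg_right
              (mul_le_mul_of_nonneg_left hu (norm_nonneg _)) (norm_nonneg _)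
        _ ≤ ‖u - 1‖ * (p:ℝ)⁻¹ * (p:ℝ)⁻¹ :=
            mul_le_mul_of_nonneg_left hu (by positivity)
    · have hklt : k < p := by omega
      have hC : ‖(p.choose k : ℚ_[p])‖ ≤ (p:ℝ)⁻¹ :=
        norm_nat_le_pinv (hp.out.dvd_choose_self (by omega) hklt)
      calc ‖u - 1‖ ^ k * ‖(p.choose k : ℚ_[p])‖
          ≤ ‖u - 1‖ ^ 2 * (p:ℝ)⁻¹ := by
            refine mul_le_mul (pow_le_pow_of_le_one (norm_nonneg _) hs1 hk.1) hC
              (norm_nonneg _) (by positivity)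
        _ = ‖u - 1‖ * ‖u - 1‖ * (p:ℝ)⁻¹ := by ring
        _ ≤ ‖u - 1‖ * (p:ℝ)⁻¹ * (p:ℝ)⁻¹ :=
            mul_le_mul_of_nonneg_right
              (mul_le_mul_of_nonneg_left hu (norm_nonneg _)) (le_of_lt pinv_pos)
  have hps : ‖(p:ℚ_[p]) * (u - 1)‖ = (p:ℝ)⁻¹ * ‖u - 1‖ := by
    rw [norm_mul, Padic.norm_p]
  have hlt : ‖u ^ p - 1 - (p:ℚ_[p]) * (u - 1)‖ < ‖(p:ℚ_[p]) * (u - 1)‖ := by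
    refine lt_of_le_of_lt hbound ?_
    rw [hps]
    calc ‖u - 1‖ * (p:ℝ)⁻¹ * (p:ℝ)⁻¹ < ‖u - 1‖ * (p:ℝ)⁻¹ :=
          mul_lt_of_lt_one_right (mul_pos hspos pinv_pos) pinv_lt_one
      _ = (p:ℝ)⁻¹ * ‖u - 1‖ := mul_comm _ _
  have h : u ^ p - 1 = (u ^ p - 1 - (p:ℚ_[p]) * (u - 1)) + (p:ℚ_[p]) * (u - 1) := by ring
  rw [h, Padic.add_eq_max_of_ne (ne_of_lt hlt), max_eq_right (le_of_lt hlt), hps]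

lemma ppow (hodd : Odd p) {u : ℚ_[p]} (hu : ‖u - 1‖ ≤ (p:ℝ)⁻¹) (a : ℕ) :
    ‖u ^ (p ^ a) - 1‖ = ((p:ℝ)⁻¹) ^ a * ‖u - 1‖ := by
  induction a with
  | zero => simp
  | succ a ih =>
    have hv : ‖u ^ (p ^ a) - 1‖ ≤ (p:ℝ)⁻¹ := by
      rw [ih]
      calc ((p:ℝ)⁻¹) ^ a * ‖u - 1‖ ≤ 1 * (p:ℝ)⁻¹ := by
            refine mul_le_mul (pow_le_one₀ (le_of_lt pinv_pos) (le_of_lt pinv_lt_one)) hu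
              (norm_nonneg _) zero_le_one
        _ = (p:ℝ)⁻¹ := one_mul _
    have h : u ^ (p ^ (a+1)) = (u ^ (p ^ a)) ^ p := by
      rw [← pow_mul, pow_succ]
    rw [h, step hodd hv, ih, pow_succ]
    ring

lemma key (hodd : Odd p) {u : ℚ_[p]} (hu : ‖u - 1‖ ≤ (p:ℝ)⁻¹) (m : ℕ) :
    ‖u ^ m - 1‖ = ‖u - 1‖ * ‖(m:ℚ_[p])‖ := by
  by_cases hm0 : m = 0
  · simp [hm0]
  set a := m.factorization p with ha
  set b := m / p ^ a with hb
  have hm : p ^ a * b = m := Nat.ordProj_mul_ordCompl_eq_self m p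
  have hbnd : ¬ p ∣ b := Nat.not_dvd_ordCompl hp.out hm0
  have hua : ‖u ^ (p ^ a) - 1‖ = ((p:ℝ)⁻¹) ^ a * ‖u - 1‖ := ppow hodd hu a
  have hva : ‖u ^ (p ^ a) - 1‖ < 1 := by
    rw [hua]
    calc ((p:ℝ)⁻¹) ^ a * ‖u - 1‖ ≤ 1 * (p:ℝ)⁻¹ :=
          mul_le_mul (pow_le_one₀ (le_of_lt pinv_pos) (le_of_lt pinv_lt_one)) hu
            (norm_nonneg _) zero_le_one
      _ < 1 := by rw [one_mul]; exact pinv_lt_one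
  have h1 : ‖u ^ m - 1‖ = ‖u ^ (p ^ a) - 1‖ := by
    rw [← hm, pow_mul]
    exact norm_pow_sub_one_coprime hva hbnd
  have h2 : ‖(m:ℚ_[p])‖ = ((p:ℝ)⁻¹) ^ a := by
    rw [← hm]
    push_cast
    rw [norm_mul, norm_pow, Padic.norm_p, norm_nat_eq_one hbnd, mul_one]
  rw [h1, hua, h2]
  ring

lemma diff (hodd : Odd p) {u : ℚ_[p]} (hu : ‖u - 1‖ ≤ (p:ℝ)⁻¹) {i j : ℕ} (hij : j < i) :
    ‖u ^ i - u ^ j‖ = ‖u - 1‖ * ‖((i - j : ℕ) : ℚ_[p])‖ := by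
  have hu' : ‖u - 1‖ < 1 := lt_of_le_of_lt hu pinv_lt_one
  have h : u ^ i - u ^ j = u ^ j * (u ^ (i - j) - 1) := by
    rw [mul_sub, mul_one, ← pow_add, Nat.add_sub_cancel' (le_of_lt hij)]
  rw [h, norm_mul, norm_pow, norm_u_eq_one hu', one_pow, one_mul, key hodd hu]

lemma prodN (r i : ℕ) (hi : i < r) :
    ∏ j ∈ (range r).erase i, (if j ≤ i then i - j else j - i)
      = i.factorial * (r - 1 - i).factorial := by
  have hsplit : (range r).erase i = range i ∪ Ico (i+1) r := by
    ext j
    simp only [mem_erase, mem_range, mem_union, mem_Ico]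
    omega
  have hdisj : Disjoint (range i) (Ico (i+1) r) := by
    rw [Finset.disjoint_left]
    intro a ha hb
    rw [mem_range] at ha
    rw [mem_Ico] at hb
    omega
  rw [hsplit, prod_union hdisj]
  have h1 : ∏ j ∈ range i, (if j ≤ i then i - j else j - i) = i.factorial := by
    calc ∏ j ∈ range i, (if j ≤ i then i - j else j - i)
        = ∏ j ∈ range i, (i - 1 - j + 1) := by
          refine prod_congr rfl fun j hj => ?_
          rw [mem_range] at hj
          rw [if_pos (by omega)]
          omega
      _ = ∏ j ∈ range i, (j + 1) := prod_range_reflect (fun j => j + 1) i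
      _ = i.factorial := prod_range_add_one_eq_factorial i
  have h2 : ∏ j ∈ Ico (i+1) r, (if j ≤ i then i - j else j - i)
      = (r - 1 - i).factorial := by
    calc ∏ j ∈ Ico (i+1) r, (if j ≤ i then i - j else j - i)
        = ∏ j ∈ Ico (i+1) r, (j - i) := by
          refine prod_congr rfl fun j hj => ?_
          rw [mem_Ico] at hj
          rw [if_neg (by omega)]
      _ = ∏ k ∈ range (r - (i+1)), ((i + 1 + k) - i) := prod_Ico_eq_prod_range _ _ _
      _ = ∏ k ∈ range (r - 1 - i), (k + 1) := by
          refine prod_congr (by congr 1; omega) fun k _ => by omega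
      _ = (r - 1 - i).factorial := prod_range_add_one_eq_factorial _
  rw [h1, h2]

end Stmt8Aux

/-- Lagrange interpolation bound at the points `u^j − 1`.  For `α_j = u^j − 1`
(`j = 0, …, r−1`):
`∏_{j≠i} |u−1|/|α_i−α_j| = (|i!|_p |(r−1−i)!|_p)^{−1}` for each `i < r`, and
`max_{i<r} ∏_{j≠i} |u−1|/|α_i−α_j| = |(r−1)!|_p^{−1}`. -/
theorem stmt8 (p : ℕ) [Fact p.Prime] (hodd : Odd p)
    (u : ℚ_[p]) (hu : ‖u - 1‖ ≤ (p : ℝ)⁻¹) (hu1 : u ≠ 1)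
    (r : ℕ) (hr : 1 ≤ r) :
    (∀ i ∈ Finset.range r,
      ∏ j ∈ (Finset.range r).erase i, ‖u - 1‖ / ‖(u ^ i - 1) - (u ^ j - 1)‖
        = (‖(Nat.factorial i : ℚ_[p])‖ * ‖(Nat.factorial (r - 1 - i) : ℚ_[p])‖)⁻¹)
    ∧ (Finset.range r).sup' (Finset.nonempty_range_iff.mpr (by omega))
        (fun i => ∏ j ∈ (Finset.range r).erase i,
          ‖u - 1‖ / ‖(u ^ i - 1) - (u ^ j - 1)‖)
      = ‖(Nat.factorial (r - 1) : ℚ_[p])‖⁻¹ := by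
  have huz : ‖u - 1‖ ≠ 0 := by
    rw [norm_ne_zero_iff]
    exact sub_ne_zero.mpr hu1
  have hkey : ∀ i ∈ Finset.range r,
      ∏ j ∈ (Finset.range r).erase i, ‖u - 1‖ / ‖(u ^ i - 1) - (u ^ j - 1)‖
        = (‖(Nat.factorial i : ℚ_[p])‖ * ‖(Nat.factorial (r - 1 - i) : ℚ_[p])‖)⁻¹ := by
    intro i hi
    rw [Finset.mem_range] at hi
    have hterm : ∀ j ∈ (Finset.range r).erase i,
        ‖u - 1‖ / ‖(u ^ i - 1) - (u ^ j - 1)‖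
          = (‖(((if j ≤ i then i - j else j - i : ℕ)) : ℚ_[p])‖)⁻¹ := by
      intro j hj
      rw [Finset.mem_erase] at hj
      have hsimp : (u ^ i - 1) - (u ^ j - 1) = u ^ i - u ^ j := by ring
      by_cases hle : j ≤ i
      · have hjlt : j < i := lt_of_le_of_ne hle hj.1
        rw [hsimp, Stmt8Aux.diff hodd hu hjlt, if_pos hle, div_mul_cancel_left₀ huz]
      · have hilt : i < j := by omega
        rw [hsimp, show ‖u ^ i - u ^ j‖ = ‖u ^ j - u ^ i‖ from norm_sub_rev _ _,
          Stmt8Aux.diff hodd hu hilt, if_neg hle, div_mul_cancel_left₀ huz]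
    rw [Finset.prod_congr rfl hterm, Finset.prod_inv_distrib, ← norm_prod, ← Nat.cast_prod,
      Stmt8Aux.prodN r i hi, Nat.cast_mul, norm_mul]
  refine ⟨hkey, ?_⟩
  have hfacpos : ∀ n : ℕ, (0:ℝ) < ‖((n.factorial : ℕ) : ℚ_[p])‖ := by
    intro n
    rw [norm_pos_iff]
    exact_mod_cast n.factorial_ne_zero
  apply le_antisymm
  · apply Finset.sup'_le
    intro i hi
    rw [hkey i hi]
    rw [Finset.mem_range] at hi
    have hle : ‖((r-1).factorial : ℚ_[p])‖
        ≤ ‖(i.factorial : ℚ_[p])‖ * ‖((r - 1 - i).factorial : ℚ_[p])‖ := by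
      have hcomb : ((r-1).choose i) * i.factorial * (r - 1 - i).factorial = (r-1).factorial :=
        Nat.choose_mul_factorial_mul_factorial (by omega : i ≤ r - 1)
      calc ‖((r-1).factorial : ℚ_[p])‖
          = ‖(((r-1).choose i : ℕ) : ℚ_[p])‖ * (‖(i.factorial : ℚ_[p])‖
              * ‖((r - 1 - i).factorial : ℚ_[p])‖) := by
            rw [← norm_mul, ← norm_mul, ← Nat.cast_mul, ← Nat.cast_mul, ← mul_assoc, hcomb]
        _ ≤ 1 * (‖(i.factorial : ℚ_[p])‖ * ‖((r - 1 - i).factorial : ℚ_[p])‖) :=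
            mul_le_mul_of_nonneg_right (Stmt8Aux.norm_nat_le_one _)
              (by positivity)
        _ = _ := one_mul _
    exact inv_anti₀ (hfacpos _) hle
  · have h0 : (0:ℕ) ∈ Finset.range r := Finset.mem_range.mpr (by omega)
    refine le_trans ?_ (Finset.le_sup' _ h0)
    rw [hkey 0 h0]
    simp
end

section
/- (Strong divisibility criterion.) Let (D, φ, Fil^•) be a filtered φ-module over Q_p whose Hodge–Tate and Smith polygons have the same endpoints, and let M be a lattice in D with a basis B adapted to both φ and the filtration. Then M is strongly divisible (i.e., the Smith polygon of φ on M equals the Hodge–Tate polygon of (D, Fil^•)) if and only if φ ∘ t_{HT,B}^{−1}(M) = M, where t_{HT,B} is the endomorphism sending each basis vector v ∈ B to p^{t_H(v)} v, with t_H(v) the largest j such that v ∈ Fil^j D. -/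
/-!
Put `L = φ ∘ t_{HT,B}⁻¹` and `F i = p^{-s i} • φ (b i)`, so that `F` is a second basis of the
lattice `M` and `L (b i) = p^{s i - tH i} • F i`. A linear map that sends one basis of a lattice
to scalar multiples `a i • F i` of another maps the lattice onto the lattice exactly when every
`a i` is a unit of the coefficient ring, and `p^k` is a unit of `ℤ_[p]` only for `k = 0`.
-/

namespace Module.Basis

variable {ι K V W : Type*} [Field K] [AddCommGroup V] [Module K V] [AddCommGroup W] [Module K W]

def lattice (R : Subring K) (b : Basis ι K V) : Set V :=
  {x | ∀ i, b.repr x i ∈ R}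

theorem basis_mem_lattice (R : Subring K) (b : Basis ι K V) (i : ι) : b i ∈ b.lattice R := by
  intro j
  rcases eq_or_ne i j with rfl | hij
  · simp
  · simp [hij]

theorem setOf_exists_sum_eq_lattice [Fintype ι] (R : Subring K) (b : Basis ι K V) :
    {x : V | ∃ c : ι → R, x = ∑ i, (c i : K) • b i} = b.lattice R := by
  ext x
  constructor
  · rintro ⟨c, rfl⟩ i
    rw [repr_sum_self]
    exact (c i).2
  · exact fun hx => ⟨fun i => ⟨b.repr x i, hx i⟩, (b.sum_repr x).symm⟩

theorem repr_map_eq_mul_repr {L : V →ₗ[K] W} {b : Basis ι K V} {F : Basis ι K W} {a : ι → K}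
    (hL : ∀ i, L (b i) = a i • F i) (x : V) (i : ι) :
    F.repr (L x) i = a i * b.repr x i := by
  have h : (F.coord i).comp L = a i • b.coord i := by
    refine b.ext fun j => ?_
    simp only [LinearMap.comp_apply, hL, LinearMap.map_smul, coord_apply, repr_self,
      LinearMap.smul_apply, smul_eq_mul]
    rcases eq_or_ne j i with rfl | hji
    · rfl
    · simp [hji]
  exact LinearMap.congr_fun h x

theorem image_lattice_eq_lattice_iff [Finite ι] (R : Subring K) {L : V →ₗ[K] W}
    {b : Basis ι K V} {F : Basis ι K W} {a : ι → K} (hL : ∀ i, L (b i) = a i • F i) :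
    L '' b.lattice R = F.lattice R ↔ ∀ i, a i ≠ 0 ∧ a i ∈ R ∧ (a i)⁻¹ ∈ R := by
  constructor
  · intro h i
    obtain ⟨y, hy_mem, hy⟩ : F i ∈ L '' b.lattice R := h ▸ F.basis_mem_lattice R i
    have hinv : a i * b.repr y i = 1 := by
      rw [← repr_map_eq_mul_repr hL, hy, repr_self, Finsupp.single_eq_same]
    have hLb : L (b i) ∈ F.lattice R := h ▸ Set.mem_image_of_mem L (b.basis_mem_lattice R i)
    refine ⟨left_ne_zero_of_mul_eq_one hinv, ?_, ?_⟩
    · simpa [repr_map_eq_mul_repr hL] using hLb i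
    · rw [← eq_inv_of_mul_eq_one_right hinv]
      exact hy_mem i
  · intro ha
    ext x
    constructor
    · rintro ⟨y, hy, rfl⟩ i
      rw [repr_map_eq_mul_repr hL]
      exact R.mul_mem (ha i).2.1 (hy i)
    · intro hx
      set y := b.equivFun.symm fun i => (a i)⁻¹ * F.repr x i
      have hy : ∀ i, b.repr y i = (a i)⁻¹ * F.repr x i := fun i => by
        rw [← b.equivFun_apply, LinearEquiv.apply_symm_apply]
      refine ⟨y, fun i => ?_, F.ext_elem fun i => ?_⟩
      · rw [hy]
        exact R.mul_mem (ha i).2.2 (hx i)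
      · rw [repr_map_eq_mul_repr hL, hy, mul_inv_cancel_left₀ (ha i).1]

end Module.Basis

theorem Padic.natCast_zpow_mem_subring_iff (p : ℕ) [Fact p.Prime] (k : ℤ) :
    (p : ℚ_[p]) ^ k ∈ PadicInt.subring p ↔ 0 ≤ k := by
  rw [PadicInt.mem_subring_iff, Padic.norm_p_zpow,
    zpow_le_one_iff_right₀ (by exact_mod_cast (Fact.out : p.Prime).one_lt), neg_nonpos]

theorem Padic.natCast_zpow_and_inv_mem_subring_iff (p : ℕ) [Fact p.Prime] (k : ℤ) :
    (p : ℚ_[p]) ^ k ≠ 0 ∧ (p : ℚ_[p]) ^ k ∈ PadicInt.subring p ∧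
      ((p : ℚ_[p]) ^ k)⁻¹ ∈ PadicInt.subring p ↔ k = 0 := by
  rw [← zpow_neg, Padic.natCast_zpow_mem_subring_iff, Padic.natCast_zpow_mem_subring_iff]
  constructor
  · rintro ⟨-, h, h'⟩
    omega
  · rintro rfl
    simp

theorem stmt17_general (p : ℕ) [Fact p.Prime]
    (D : Type*) [AddCommGroup D] [Module ℚ_[p] D]
    (d : ℕ) (b : Module.Basis (Fin d) ℚ_[p] D)
    (φ : D ≃ₗ[ℚ_[p]] D)
    (tH : Fin d → ℤ)
    (s : Fin d → ℤ)
    (M : Set D)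
    (hM : M = {x : D | ∃ c : Fin d → ℤ_[p], x = ∑ i, ((c i : ℚ_[p])) • b i})
    (hadapt : M = {x : D | ∃ c : Fin d → ℤ_[p],
      x = ∑ i, ((c i : ℚ_[p])) • (((p : ℚ_[p]) ^ (-(s i))) • φ (b i))}) :
    (∀ i, s i = tH i) ↔
      (⇑φ ∘ ⇑((b.constr ℚ_[p]) (fun i => ((p : ℚ_[p]) ^ (-(tH i))) • b i))) '' M
        = M := by
  have hp : (p : ℚ_[p]) ≠ 0 := Nat.cast_ne_zero.mpr (Fact.out : p.Prime).ne_zero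
  let F := (b.map φ).unitsSMul fun i => Units.mk0 ((p : ℚ_[p]) ^ (-s i)) (zpow_ne_zero _ hp)
  have hF : ∀ i, F i = (p : ℚ_[p]) ^ (-s i) • φ (b i) := fun i => by
    simp [F, Module.Basis.unitsSMul_apply, Units.smul_def]
  let L := φ.toLinearMap ∘ₗ b.constr ℚ_[p] fun i => (p : ℚ_[p]) ^ (-tH i) • b i
  have hL : ∀ i, L (b i) = (p : ℚ_[p]) ^ (s i - tH i) • F i := fun i => by
    rw [hF, smul_smul, ← zpow_add₀ hp, show s i - tH i + -s i = -tH i by ring]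
    simp [L]
  have hMb : M = b.lattice (PadicInt.subring p) := by
    rw [hM]
    exact b.setOf_exists_sum_eq_lattice (PadicInt.subring p)
  have hMF : M = F.lattice (PadicInt.subring p) := by
    simp only [hadapt, ← hF]
    exact F.setOf_exists_sum_eq_lattice (PadicInt.subring p)
  have key := Module.Basis.image_lattice_eq_lattice_iff (PadicInt.subring p) hL
  rw [← hMb, ← hMF] at key
  refine (forall_congr' fun i => ?_).trans key.symm
  rw [Padic.natCast_zpow_and_inv_mem_subring_iff, sub_eq_zero]

/-- Strong divisibility criterion.  Let `(D, φ, Fil)` be a filtered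
`φ`-module over `ℚ_p` whose Hodge–Tate and Smith polygons have the same
endpoints, `b` a basis adapted to both `φ` (with Smith invariants `p^{s_i}`)
and the filtration (with Hodge–Tate weights `t_H(b_i) = tH i`), and
`M = ⊕ Z_p b_i` the corresponding lattice.  Then the Smith polygon of `φ` on
`M` equals the Hodge–Tate polygon (i.e. `s = tH`) if and only if
`φ ∘ t_{HT,B}^{−1}(M) = M`. -/
theorem stmt17 (p : ℕ) [Fact p.Prime] (hodd : Odd p)
    (D : Type*) [AddCommGroup D] [Module ℚ_[p] D]
    (d : ℕ) (b : Module.Basis (Fin d) ℚ_[p] D)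
    (φ : D ≃ₗ[ℚ_[p]] D)
    (Fil : ℤ → Submodule ℚ_[p] D)
    (hFilmono : ∀ i j : ℤ, i ≤ j → Fil j ≤ Fil i)
    (hFilexh : ∃ a : ℤ, ∀ j ≤ a, Fil j = ⊤)
    (hFilsep : ∃ c : ℤ, ∀ j : ℤ, c ≤ j → Fil j = ⊥)
    (tH : Fin d → ℤ) (htHmono : Monotone tH)
    (hbFil : ∀ i : Fin d, b i ∈ Fil (tH i) ∧ b i ∉ Fil (tH i + 1))
    (s : Fin d → ℤ) (hsmono : Monotone s)
    (M : Set D)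
    (hM : M = {x : D | ∃ c : Fin d → ℤ_[p], x = ∑ i, ((c i : ℚ_[p])) • b i})
    (hadapt : M = {x : D | ∃ c : Fin d → ℤ_[p],
      x = ∑ i, ((c i : ℚ_[p])) • (((p : ℚ_[p]) ^ (-(s i))) • φ (b i))})
    (hend : ∑ i, s i = ∑ i, tH i) :
    (∀ i, s i = tH i) ↔
      (⇑φ ∘ ⇑((b.constr ℚ_[p]) (fun i => ((p : ℚ_[p]) ^ (-(tH i))) • b i))) '' M
        = M :=
  stmt17_general p D d b φ tH s M hM hadapt
end

section
/- (Katz–Mazur comparison.) Let D be a φ-module over Q_p of dimension d (φ bijective) and M a Z_p-lattice in D. Then the Smith polygon of φ on M and the Newton polygon of det_D(1 − xφ) have the same endpoints, and the Smith polygon lies on or below the Newton polygon. Equivalently, if s_1 ≤ ⋯ ≤ s_d are the valuations of the elementary divisors of φ(M) in M and t_1 ≤ ⋯ ≤ t_d the valuations of the eigenvalues of φ (with multiplicity), then s_1 + ⋯ + s_k ≤ t_1 + ⋯ + t_k for all k, with equality at k = d. -/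
/-!
For `c > 0` the Gauss norm `‖∑ aₘ Xᵐ‖_c = maxₘ ‖aₘ‖ cᵐ` on `K[X]` is multiplicative, so the
characteristic polynomial `∏ (X - αᵢ)` of `φ` has Gauss norm `∏ max ‖αᵢ‖ c`. On the other hand,
`φ(eⱼ) = p^{sⱼ} ∑ Cᵢⱼ eᵢ` with `C ∈ GL_d(ℤ_p)`, so the `j`-th column of the matrix of `φ` has
entries of norm `≤ p^{-sⱼ}`, and the Leibniz expansion of `det (X - A)` bounds the same Gauss norm
by `∏ max (p^{-sⱼ}) c`. For `c = p^{-sₖ}` the monotonicity of `s` turns this bound into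
`p^{-(s₀ + ⋯ + sₖ₋₁)} c^{d-k}`, while the Gauss norm is at least `p^{-(t₀ + ⋯ + tₖ₋₁)} c^{d-k}`.
Equality at `k = d` compares `‖det φ‖ = ∏ ‖p^{sⱼ}‖` with `∏ ‖αᵢ‖`.
-/

open Polynomial Finset

theorem AbsoluteValue.det_le_prod_of_isNonarchimedean {R n : Type*} [CommRing R] [Nontrivial R]
    [Fintype n] [DecidableEq n] (v : AbsoluteValue R ℝ) (hv : IsNonarchimedean v)
    (M : Matrix n n R) {u : n → ℝ} (hM : ∀ i j, v (M i j) ≤ u j) :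
    v M.det ≤ ∏ j, u j := by
  rw [Matrix.det_apply]
  refine (hv.apply_sum_le_sup univ_nonempty).trans (sup'_le _ _ fun σ _ => ?_)
  rw [Units.smul_def, zsmul_eq_mul, map_mul, map_prod]
  rcases Int.units_eq_one_or (Equiv.Perm.sign σ) with h | h <;>
  · simp only [h, Units.val_one, Units.val_neg, Int.cast_one, Int.cast_neg, map_neg_eq_map,
      map_one, one_mul]
    exact prod_le_prod (fun i _ => v.nonneg _) fun i _ => hM _ _

theorem isUltrametricDist_of_norm_algebraMap {F K : Type*} [NormedField F] [IsUltrametricDist F]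
    [NormedField K] [Algebra F K] (h : ∀ x, ‖algebraMap F K x‖ = ‖x‖) : IsUltrametricDist K :=
  IsUltrametricDist.isUltrametricDist_of_forall_norm_natCast_le_one fun n => by
    rw [← map_natCast (algebraMap F K), h]
    exact IsUltrametricDist.norm_natCast_le_one F n

namespace Polynomial

variable {K : Type*} [NormedField K] [IsUltrametricDist K] {c : ℝ}

noncomputable def gaussAbv (hc : 0 < c) : AbsoluteValue K[X] ℝ :=
  letI := gaussNorm_isAbsoluteValue (v := IsAbsoluteValue.toAbsoluteValue (norm : K → ℝ))
    IsUltrametricDist.isNonarchimedean_norm hc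
  IsAbsoluteValue.toAbsoluteValue (gaussNorm (IsAbsoluteValue.toAbsoluteValue (norm : K → ℝ)) c)

theorem gaussAbv_apply (hc : 0 < c) (P : K[X]) :
    gaussAbv hc P = P.gaussNorm (IsAbsoluteValue.toAbsoluteValue (norm : K → ℝ)) c :=
  rfl

theorem isNonarchimedean_gaussAbv (hc : 0 < c) : IsNonarchimedean (gaussAbv (K := K) hc) :=
  isNonarchimedean_gaussNorm _ IsUltrametricDist.isNonarchimedean_norm hc.le

@[simp]
theorem gaussAbv_C (hc : 0 < c) (a : K) : gaussAbv hc (C a) = ‖a‖ := by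
  simp [gaussAbv_apply]

theorem gaussAbv_X_sub_C (hc : 0 < c) (a : K) : gaussAbv hc (X - C a) = max ‖a‖ c := by
  have hle (n : ℕ) : ‖(X - C a).coeff n‖ * c ^ n ≤ gaussAbv hc (X - C a) :=
    le_gaussNorm (IsAbsoluteValue.toAbsoluteValue (norm : K → ℝ)) (X - C a) hc.le n
  refine le_antisymm ?_ (max_le (by simpa using hle 0) (by simpa using hle 1))
  calc gaussAbv hc (X - C a) ≤ max (gaussAbv hc X) (gaussAbv hc (-C a)) := by
        rw [sub_eq_add_neg]; exact isNonarchimedean_gaussAbv hc _ _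
    _ = max ‖a‖ c := by
        rw [map_neg_eq_map, max_comm, gaussAbv_C, gaussAbv_apply, ← monomial_one_one_eq_X,
          gaussNorm_monomial]
        simp

end Polynomial

namespace Matrix

variable {K n : Type*} [NormedField K] [Fintype n] [DecidableEq n] {c : ℝ}

theorem gaussAbv_charpoly_le [IsUltrametricDist K] (hc : 0 < c) (A : Matrix n n K) {w : n → ℝ}
    (hA : ∀ i j, ‖A i j‖ ≤ w j) : gaussAbv hc A.charpoly ≤ ∏ j, max (w j) c := by
  refine (gaussAbv hc).det_le_prod_of_isNonarchimedean (isNonarchimedean_gaussAbv hc) _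
    fun i j => ?_
  rcases eq_or_ne i j with rfl | hij
  · rw [charmatrix_apply_eq, gaussAbv_X_sub_C]
    exact max_le_max_right c (hA i i)
  · rw [charmatrix_apply_ne _ _ _ hij, map_neg_eq_map, gaussAbv_C]
    exact (hA i j).trans (le_max_left _ _)

theorem prod_max_norm_le_of_charpoly_eq [IsUltrametricDist K] (A : Matrix n n K) {w : n → ℝ}
    (hA : ∀ i j, ‖A i j‖ ≤ w j) {ι : Type*} [Fintype ι] {α : ι → K}
    (hα : A.charpoly = ∏ i, (X - C (α i))) (hc : 0 < c) :
    ∏ i, max ‖α i‖ c ≤ ∏ j, max (w j) c := by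
  simpa only [hα, map_prod, gaussAbv_X_sub_C] using gaussAbv_charpoly_le hc A hA

theorem norm_det_eq_prod_norm_of_charpoly_eq {ι : Type*} [Fintype ι] (A : Matrix n n K) {α : ι → K}
    (hα : A.charpoly = ∏ i, (X - C (α i))) : ‖A.det‖ = ∏ i, ‖α i‖ := by
  rw [det_eq_sign_charpoly_coeff, hα, coeff_zero_eq_eval_zero, eval_prod]
  simp [norm_prod]

end Matrix

theorem Module.Basis.exists_transition_of_setOf_sum_smul_eq {ι R F V : Type*} [Fintype ι]
    [DecidableEq ι] [CommRing R] [CommRing F] [AddCommGroup V] [Module F V] (b : Module.Basis ι F V)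
    (g : R →+* F) (f : ι → V)
    (h : {x : V | ∃ c : ι → R, x = ∑ i, g (c i) • b i}
        = {x : V | ∃ c : ι → R, x = ∑ i, g (c i) • f i}) :
    ∃ C C' : Matrix ι ι R, C.map g * C'.map g = 1 ∧ ∀ j, f j = ∑ i, g (C i j) • b i := by
  have mem_self (v : ι → V) (j : ι) : ∃ c : ι → R, v j = ∑ i, g (c i) • v i :=
    ⟨Pi.single j 1, by simp [Pi.single_apply, apply_ite g]⟩
  have hf (j : ι) : ∃ c : ι → R, f j = ∑ i, g (c i) • b i :=
    (Set.ext_iff.mp h (f j)).2 (mem_self f j)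
  have hb (j : ι) : ∃ c : ι → R, b j = ∑ i, g (c i) • f i :=
    (Set.ext_iff.mp h (b j)).1 (mem_self b j)
  choose C hC using hf
  choose C' hC' using hb
  refine ⟨Matrix.of fun i j => C j i, Matrix.of fun i j => C' j i, ?_, fun j => hC j⟩
  -- the `k`-th coordinate of `b j = ∑ᵢ C'ᵢⱼ fᵢ = ∑ₖ (C C')ₖⱼ bₖ`
  ext k j
  have hrepr (i : ι) : b.repr (f i) k = g (C i k) := by
    rw [hC i, b.repr_sum_self]
  have := congr_arg (fun x => b.repr x k) (hC' j)
  simp only [b.repr_self, Finsupp.single_apply, map_sum, map_smul, Finsupp.coe_finsetSum,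
    Finsupp.coe_smul, Finset.sum_apply, Pi.smul_apply, hrepr, smul_eq_mul] at this
  simp only [Matrix.mul_apply, Matrix.map_apply, Matrix.of_apply, Matrix.one_apply,
    eq_comm (a := k), this, mul_comm]

theorem LinearMap.toMatrix_eq_mul_diagonal {ι F V : Type*} [Fintype ι] [DecidableEq ι]
    [CommRing F] [AddCommGroup V] [Module F V] (b : Module.Basis ι F V) (φ : V →ₗ[F] V)
    (M : Matrix ι ι F) (u : ι → F) (hφ : ∀ j, φ (b j) = u j • ∑ i, M i j • b i) :
    LinearMap.toMatrix b b φ = M * Matrix.diagonal u := by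
  ext i j
  rw [LinearMap.toMatrix_apply, hφ, map_smul, Finsupp.smul_apply, b.repr_sum_self,
    Matrix.mul_diagonal, smul_eq_mul, mul_comm]

theorem PadicInt.norm_det_map_eq_one {p : ℕ} [Fact p.Prime] {ι : Type*} [Fintype ι]
    [DecidableEq ι] {C C' : Matrix ι ι ℤ_[p]}
    (h : C.map PadicInt.Coe.ringHom * C'.map PadicInt.Coe.ringHom = 1) :
    ‖(C.map PadicInt.Coe.ringHom).det‖ = 1 := by
  have hle (M : Matrix ι ι ℤ_[p]) : ‖(M.map PadicInt.Coe.ringHom).det‖ ≤ 1 := by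
    rw [← RingHom.mapMatrix_apply, ← RingHom.map_det]
    exact PadicInt.norm_le_one _
  have hmul := congr_arg (fun M => ‖M.det‖) h
  simp only [Matrix.det_mul, norm_mul, Matrix.det_one, norm_one] at hmul
  nlinarith [hle C, hle C', norm_nonneg (C.map PadicInt.Coe.ringHom).det,
    norm_nonneg (C'.map PadicInt.Coe.ringHom).det]

theorem exists_toMatrix_eq_mul_diagonal_of_setOf_eq {p : ℕ} [Fact p.Prime] {ι V : Type*}
    [Fintype ι] [DecidableEq ι] [AddCommGroup V] [Module ℚ_[p] V] (b : Module.Basis ι ℚ_[p] V)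
    (φ : V →ₗ[ℚ_[p]] V) (s : ι → ℤ)
    (hM : {x : V | ∃ c : ι → ℤ_[p], x = ∑ i, (c i : ℚ_[p]) • b i}
        = {x : V | ∃ c : ι → ℤ_[p], x = ∑ i, (c i : ℚ_[p]) • ((p : ℚ_[p]) ^ (-(s i)) • φ (b i))}) :
    ∃ C : Matrix ι ι ℤ_[p], ‖(C.map PadicInt.Coe.ringHom).det‖ = 1 ∧
      LinearMap.toMatrix b b φ
        = C.map PadicInt.Coe.ringHom * Matrix.diagonal fun j => (p : ℚ_[p]) ^ s j := by
  obtain ⟨C, C', hCC', hC⟩ := b.exists_transition_of_setOf_sum_smul_eq PadicInt.Coe.ringHom _ hM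
  refine ⟨C, PadicInt.norm_det_map_eq_one hCC',
    LinearMap.toMatrix_eq_mul_diagonal b _ _ _ fun j => ?_⟩
  have hp : (p : ℚ_[p]) ≠ 0 := mod_cast (Fact.out : p.Prime).ne_zero
  simp only [Matrix.map_apply]
  rw [← hC j, smul_smul, ← zpow_add₀ hp, add_neg_cancel, zpow_zero, one_smul]

theorem prod_filter_le_of_prod_max_le {ι : Type*} [Fintype ι] (P : ι → Prop) [DecidablePred P]
    {x y : ι → ℝ} {c : ℝ} (hx : ∀ i, 0 ≤ x i) (hc : 0 < c) (hyP : ∀ i, P i → c ≤ y i)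
    (hyP' : ∀ i, ¬P i → y i ≤ c) (h : ∏ i, max (x i) c ≤ ∏ i, max (y i) c) :
    ∏ i ∈ univ.filter P, x i ≤ ∏ i ∈ univ.filter P, y i := by
  refine le_of_mul_le_mul_right ?_ (prod_pos fun i (_ : i ∈ univ.filter (¬P ·)) => hc)
  calc (∏ i ∈ univ.filter P, x i) * ∏ i ∈ univ.filter (¬P ·), c
      ≤ (∏ i ∈ univ.filter P, max (x i) c) * ∏ i ∈ univ.filter (¬P ·), max (x i) c := by
        gcongr with i _ i _
        exacts [fun i _ => hx i, le_max_left _ _, le_max_right _ _]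
    _ = ∏ i, max (x i) c := prod_filter_mul_prod_filter_not _ _ _
    _ ≤ ∏ i, max (y i) c := h
    _ = (∏ i ∈ univ.filter P, y i) * ∏ i ∈ univ.filter (¬P ·), c := by
        rw [← prod_filter_mul_prod_filter_not univ P]
        congr 1 <;> refine prod_congr rfl fun i hi => ?_
        · exact max_eq_left (hyP i (mem_filter.1 hi).2)
        · exact max_eq_right (hyP' i (mem_filter.1 hi).2)

theorem prod_rpow_neg_ratCast {ι : Type*} (S : Finset ι) {q : ℝ} (hq : 0 < q) (u : ι → ℚ) :
    ∏ i ∈ S, q ^ (-(u i : ℝ)) = q ^ (-((∑ i ∈ S, u i : ℚ) : ℝ)) := by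
  rw [← Real.rpow_sum_of_pos hq]
  push_cast
  rw [sum_neg_distrib]

theorem sum_le_sum_of_prod_rpow_neg_le {ι : Type*} {S : Finset ι} {q : ℝ} (hq : 1 < q)
    {s t : ι → ℚ} (h : ∏ i ∈ S, q ^ (-(t i : ℝ)) ≤ ∏ i ∈ S, q ^ (-(s i : ℝ))) :
    ∑ i ∈ S, s i ≤ ∑ i ∈ S, t i := by
  have hq₀ : 0 < q := zero_lt_one.trans hq
  rwa [prod_rpow_neg_ratCast _ hq₀, prod_rpow_neg_ratCast _ hq₀, Real.rpow_le_rpow_left_iff hq, neg_le_neg_iff, Rat.cast_le] at h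

theorem sum_filter_lt_le_of_prod_max_le {d : ℕ} {q : ℝ} (hq : 1 < q) {s t : Fin d → ℚ}
    (hs : Monotone s)
    (h : ∀ c > 0, ∏ i, max (q ^ (-(t i : ℝ))) c ≤ ∏ i, max (q ^ (-(s i : ℝ))) c)
    {k : ℕ} (hk : k < d) :
    ∑ i ∈ univ.filter (fun i : Fin d => (i : ℕ) < k), s i
      ≤ ∑ i ∈ univ.filter (fun i : Fin d => (i : ℕ) < k), t i := by
  have hanti {i j : Fin d} (hij : i ≤ j) : q ^ (-(s j : ℝ)) ≤ q ^ (-(s i : ℝ)) :=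
    Real.rpow_le_rpow_of_exponent_le hq.le (neg_le_neg (by exact_mod_cast hs hij))
  have hc : 0 < q ^ (-(s ⟨k, hk⟩ : ℝ)) := by positivity
  refine sum_le_sum_of_prod_rpow_neg_le hq (prod_filter_le_of_prod_max_le _
    (fun i => by positivity) hc (fun i hi => hanti ?_) (fun i hi => hanti ?_) (h _ hc))
  · exact Fin.mk_le_of_le_val hi.le
  · exact Fin.le_def.2 (not_lt.1 hi)

theorem stmt18_general (p : ℕ) [Fact p.Prime]
    (D : Type*) [AddCommGroup D] [Module ℚ_[p] D]
    [Module.Finite ℚ_[p] D] [Module.Free ℚ_[p] D]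
    (d : ℕ) (φ : D ≃ₗ[ℚ_[p]] D)
    (e : Fin d → D) (hindep : LinearIndependent ℚ_[p] e)
    (hspan : Submodule.span ℚ_[p] (Set.range e) = ⊤)
    (s : Fin d → ℤ) (hsmono : Monotone s)
    (hM : {x : D | ∃ c : Fin d → ℤ_[p], x = ∑ i, ((c i : ℚ_[p])) • e i}
        = {x : D | ∃ c : Fin d → ℤ_[p],
            x = ∑ i, ((c i : ℚ_[p])) • (((p : ℚ_[p]) ^ (-(s i))) • φ (e i))})
    (K : Type*) [NormedField K] [Algebra ℚ_[p] K]
    (hiso : ∀ x : ℚ_[p], ‖algebraMap ℚ_[p] K x‖ = ‖x‖)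
    (α : Fin d → K)
    (hchar : (LinearMap.charpoly (φ : D →ₗ[ℚ_[p]] D)).map (algebraMap ℚ_[p] K)
        = ∏ i, (Polynomial.X - Polynomial.C (α i)))
    (t : Fin d → ℚ)
    (hα : ∀ i, ‖α i‖ = (p : ℝ) ^ (-((t i : ℝ)))) :
    (∀ k : ℕ, k ≤ d →
      ∑ i ∈ Finset.univ.filter (fun i : Fin d => (i : ℕ) < k), (s i : ℚ)
        ≤ ∑ i ∈ Finset.univ.filter (fun i : Fin d => (i : ℕ) < k), t i) ∧
    ∑ i, (s i : ℚ) = ∑ i, t i := by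
  have := isUltrametricDist_of_norm_algebraMap hiso
  have hp : (1 : ℝ) < p := mod_cast (Fact.out : p.Prime).one_lt
  set b := Module.Basis.mk hindep hspan.ge
  obtain ⟨C, hCdet, hA⟩ := exists_toMatrix_eq_mul_diagonal_of_setOf_eq b φ.toLinearMap s
    (by rw [Module.Basis.coe_mk]; exact hM)
  set B := (LinearMap.toMatrix b b φ).map (algebraMap ℚ_[p] K) with hBdef
  have hnorm (j : Fin d) : ‖(p : ℚ_[p]) ^ s j‖ = (p : ℝ) ^ (-((s j : ℚ) : ℝ)) := by
    rw [Padic.norm_p_zpow, ← Real.rpow_intCast]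
    push_cast
    rfl
  have hB : B.charpoly = ∏ i, (Polynomial.X - Polynomial.C (α i)) := by
    rw [Matrix.charpoly_map, LinearMap.charpoly_toMatrix, hchar]
  have hBle (i j : Fin d) : ‖B i j‖ ≤ (p : ℝ) ^ (-((s j : ℚ) : ℝ)) := by
    rw [hBdef, Matrix.map_apply, hiso, hA, Matrix.mul_diagonal, norm_mul, ← hnorm]
    exact mul_le_of_le_one_left (norm_nonneg _) (PadicInt.norm_le_one (C i j))
  have hBdet : ∏ i, (p : ℝ) ^ (-(t i : ℝ)) = ∏ j, (p : ℝ) ^ (-((s j : ℚ) : ℝ)) := by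
    rw [← funext hα, ← B.norm_det_eq_prod_norm_of_charpoly_eq hB, hBdef,
      ← RingHom.mapMatrix_apply, ← RingHom.map_det, hiso, hA, Matrix.det_mul, Matrix.det_diagonal,
      norm_mul, hCdet, one_mul, norm_prod]
    exact prod_congr rfl fun j _ => hnorm j
  have hsum : ∑ i, (s i : ℚ) = ∑ i, t i :=
    le_antisymm (sum_le_sum_of_prod_rpow_neg_le hp hBdet.le)
      (sum_le_sum_of_prod_rpow_neg_le hp hBdet.ge)
  refine ⟨fun k hk => ?_, hsum⟩
  rcases hk.lt_or_eq with hk | rfl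
  · refine sum_filter_lt_le_of_prod_max_le hp (fun i j hij => mod_cast hsmono hij)
      (fun c hc => ?_) hk
    simpa only [hα] using B.prod_max_norm_le_of_charpoly_eq hBle hB hc
  · simpa only [filter_true_of_mem fun (i : Fin k) _ => i.isLt] using hsum.le

/-- Katz–Mazur comparison.  Let `D` be a `φ`-module over `ℚ_p` of dimension
`d` and `M` a lattice spanned by a basis `e`, with elementary divisors
`p^{s_1}, …, p^{s_d}` of `φ(M)` in `M` (`s` increasing, encoded by the adapted
basis property), and let `t_1 ≤ … ≤ t_d` be the valuations of the eigenvalues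
`α_i` of `φ` (in a normed extension `K`, `‖α_i‖ = p^{−t_i}`).  Then
`s_1 + ⋯ + s_k ≤ t_1 + ⋯ + t_k` for all `k`, with equality at `k = d`. -/
theorem stmt18 (p : ℕ) [Fact p.Prime]
    (D : Type*) [AddCommGroup D] [Module ℚ_[p] D]
    [Module.Finite ℚ_[p] D] [Module.Free ℚ_[p] D]
    (d : ℕ) (φ : D ≃ₗ[ℚ_[p]] D)
    (e : Fin d → D) (hindep : LinearIndependent ℚ_[p] e)
    (hspan : Submodule.span ℚ_[p] (Set.range e) = ⊤)
    (s : Fin d → ℤ) (hsmono : Monotone s)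
    (hM : {x : D | ∃ c : Fin d → ℤ_[p], x = ∑ i, ((c i : ℚ_[p])) • e i}
        = {x : D | ∃ c : Fin d → ℤ_[p],
            x = ∑ i, ((c i : ℚ_[p])) • (((p : ℚ_[p]) ^ (-(s i))) • φ (e i))})
    (K : Type*) [NormedField K] [Algebra ℚ_[p] K]
    (hiso : ∀ x : ℚ_[p], ‖algebraMap ℚ_[p] K x‖ = ‖x‖)
    (α : Fin d → K)
    (hchar : (LinearMap.charpoly (φ : D →ₗ[ℚ_[p]] D)).map (algebraMap ℚ_[p] K)
        = ∏ i, (Polynomial.X - Polynomial.C (α i)))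
    (t : Fin d → ℚ) (htmono : Monotone t)
    (hα : ∀ i, ‖α i‖ = (p : ℝ) ^ (-((t i : ℝ)))) :
    (∀ k : ℕ, k ≤ d →
      ∑ i ∈ Finset.univ.filter (fun i : Fin d => (i : ℕ) < k), (s i : ℚ)
        ≤ ∑ i ∈ Finset.univ.filter (fun i : Fin d => (i : ℕ) < k), t i) ∧
    ∑ i, (s i : ℚ) = ∑ i, t i :=
  stmt18_general p D d φ e hindep hspan s hsmono hM K hiso α hchar t hα
end
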